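/- Let G be a group such that the abelianization G/D is finitely generated, where D = ⁅G,G⁆. Let D̃ be the preimage in G of the torsion subgroup of G/D (i.e., the set of elements of G whose class in G/D has finite order). Then ⁅D,G⁆ has finite index in ⁅D̃,G⁆; equivalently, the quotient group ⁅D̃,G⁆/⁅D,G⁆ is finite. -/

import Mathlib

/-!
Put `N = ⁅D, G⁆` and `H = G ⧸ N`. The commutator subgroup of `H` is central, so `⁅a, b⁆` is
multiplicative in each variable and descends to a pairing `Hᵃᵇ × Hᵃᵇ → Z(H)`. For a torsion class
`t` of `Hᵃᵇ`, the homomorphism `⁅t, -⁆ : Hᵃᵇ → Z(H)` has finitely generated torsion image, which is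
therefore finite. As the torsion subgroup of the finitely generated abelian group `Hᵃᵇ` is finite,
the image of `⁅D̃, G⁆` in `H` lies in a finitely generated torsion subgroup of the abelian group
`Z(H)`, hence is finite, and the kernel of `⁅D̃, G⁆ → H` is `⁅D, G⁆`.
-/

open Subgroup
open scoped commutatorElement IsMulCommutative

theorem CommGroup.finite_torsion_of_fg (A : Type*) [CommGroup A] [Group.FG A] :
    Finite (CommGroup.torsion A) := by
  have : Module.Finite ℤ (Additive A) := Module.Finite.iff_addGroup_fg.mpr inferInstance
  -- makes the torsion submodule finitely generated
  have : IsNoetherian ℤ (Additive A) := isNoetherian_of_isNoetherianRing_of_finite ℤ _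
  have hfin :=
    Module.finite_of_fg_torsion _ (Submodule.torsion_isTorsion (R := ℤ) (M := Additive A))
  have h : (CommGroup.torsion A : Set A) =
      (Submodule.torsion ℤ (Additive A) : Set (Additive A)) := by
    rw [← Submodule.coe_toAddSubgroup, Submodule.torsion_int]
    rfl
  exact Set.finite_coe_iff.mpr (h ▸ Set.finite_coe_iff.mp hfin)

theorem Subgroup.finite_quotient_subgroupOf_of_finite_map {G : Type*} [Group G]
    {K N : Subgroup G} [N.Normal] (h : Finite (K.map (QuotientGroup.mk' N))) :
    Finite (K ⧸ N.subgroupOf K) := by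
  rw [← QuotientGroup.ker_mk' N, ← MonoidHom.ker_domRestrict]
  rw [← MonoidHom.domRestrict_range] at h
  exact Finite.of_equiv _ (QuotientGroup.quotientKerEquivRange _).symm.toEquiv

theorem Abelianization.map_surjective {G H : Type*} [Group G] [Group H] {f : G →* H}
    (hf : Function.Surjective f) : Function.Surjective (Abelianization.map f) := by
  intro y
  obtain ⟨x, rfl⟩ := QuotientGroup.mk_surjective y
  obtain ⟨g, rfl⟩ := hf x
  exact ⟨.of g, rfl⟩

section CentralCommutators

variable {H : Type*} [Group H]

theorem commutatorElement_mem_center (hc : commutator H ≤ center H) (a b : H) :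
    ⁅a, b⁆ ∈ center H :=
  hc (commutator_mem_commutator (mem_top a) (mem_top b))

theorem commutatorElement_mul_right_of_le_center (hc : commutator H ≤ center H) (a b c : H) :
    ⁅a, b * c⁆ = ⁅a, b⁆ * ⁅a, c⁆ := by
  have h : ⁅a, b * c⁆ = ⁅a, b⁆ * (b * ⁅a, c⁆ * b⁻¹) := by
    simp only [commutatorElement_def]
    group
  rw [h, mem_center_iff.mp (commutatorElement_mem_center hc a c) b, mul_inv_cancel_right]

theorem commutatorElement_mul_left_of_le_center (hc : commutator H ≤ center H) (a b c : H) :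
    ⁅a * b, c⁆ = ⁅a, c⁆ * ⁅b, c⁆ := by
  have h : ⁅a * b, c⁆ = a * ⁅b, c⁆ * a⁻¹ * ⁅a, c⁆ := by
    simp only [commutatorElement_def]
    group
  rw [h, mem_center_iff.mp (commutatorElement_mem_center hc b c) a, mul_inv_cancel_right]
  exact (mem_center_iff.mp (commutatorElement_mem_center hc b c) _).symm

def commutatorBihom (hc : commutator H ≤ center H) : H →* H →* center H :=
  MonoidHom.mk'
    (fun a ↦ MonoidHom.mk' (fun b ↦ ⟨⁅a, b⁆, commutatorElement_mem_center hc a b⟩)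
      fun b c ↦ Subtype.ext (commutatorElement_mul_right_of_le_center hc a b c))
    fun a b ↦ MonoidHom.ext fun c ↦ Subtype.ext (commutatorElement_mul_left_of_le_center hc a b c)

def Abelianization.commutatorPairing (hc : commutator H ≤ center H) :
    Abelianization H →* Abelianization H →* center H :=
  Abelianization.lift (Abelianization.lift (commutatorBihom hc).flip).flip

end CentralCommutators

theorem commutator_quotient_le_center {G : Type*} [Group G] {N : Subgroup G} [N.Normal]
    (hN : ⁅commutator G, (⊤ : Subgroup G)⁆ ≤ N) : commutator (G ⧸ N) ≤ center (G ⧸ N) := by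
  rw [commutator_def, ← map_top_of_surjective _ (QuotientGroup.mk'_surjective _), ← map_commutator,
    ← commutator_def, map_le_iff_le_comap, ← Subgroup.upperCentralSeriesStep_eq_comap_center]
  exact fun x hx y ↦ hN (commutator_mem_commutator hx (mem_top y))

/-- The subgroup `D̃`. -/
def torsionModCommutator (G : Type*) [Group G] : Subgroup G :=
  (CommGroup.torsion (Abelianization G)).comap Abelianization.of

theorem map_torsionModCommutator_le {G H : Type*} [Group G] [Group H] (f : G →* H) :
    (torsionModCommutator G).map f ≤ torsionModCommutator H := by
  rintro _ ⟨x, hx, rfl⟩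
  exact (Abelianization.map f).isOfFinOrder hx

theorem finite_commutator_torsionModCommutator_of_le_center {H : Type*} [Group H]
    (hc : commutator H ≤ center H) [Group.FG (Abelianization H)] :
    Finite (⁅torsionModCommutator H, ⊤⁆ : Subgroup H) := by
  set P := Abelianization.commutatorPairing hc
  have := CommGroup.finite_torsion_of_fg (Abelianization H)
  set Z : Subgroup (center H) := ⨆ t : CommGroup.torsion (Abelianization H), (P t).range
  have : Group.FG Z := (Group.fg_iff_subgroup_fg Z).mpr <|
    FG.iSup _ fun _ ↦ (Group.fg_iff_subgroup_fg _).mp (Group.fg_range _)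
  have hZ_torsion : Z ≤ CommGroup.torsion (center H) := iSup_le fun t ↦ by
    rintro _ ⟨x, rfl⟩
    exact (P.flip x).isOfFinOrder t.2
  have : Finite Z := CommGroup.finite_of_fg_isMulTorsion Z fun z ↦
    Submonoid.isOfFinOrder_coe.mp (hZ_torsion z.2)
  have : Finite (Z.map (center H).subtype) :=
    Finite.of_equiv _ (Z.equivMapOfInjective _ (subtype_injective _)).toEquiv
  have hle : ⁅torsionModCommutator H, (⊤ : Subgroup H)⁆ ≤ Z.map (center H).subtype := by
    rw [commutator_le]
    intro s hs g _
    exact ⟨P (.of s) (.of g), mem_iSup_of_mem ⟨_, hs⟩ ⟨_, rfl⟩, rfl⟩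
  exact Finite.of_injective _ (inclusion_injective hle)

/-- Let `G` be a group whose abelianization `G/D` (with `D = ⁅G,G⁆`) is finitely
generated, and let `D̃` be the preimage in `G` of the torsion subgroup of `G/D`.
Then `⁅D,G⁆` has finite index in `⁅D̃,G⁆`: the quotient `⁅D̃,G⁆/⁅D,G⁆` is finite. -/
theorem commutator_torsion_preimage_finite_index (G : Type*) [Group G]
    (hfg : Group.FG (Abelianization G)) :
    Finite ((⁅(CommGroup.torsion (Abelianization G)).comap Abelianization.of,
        (⊤ : Subgroup G)⁆ : Subgroup G) ⧸
      ((⁅commutator G, (⊤ : Subgroup G)⁆ : Subgroup G).subgroupOf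
        ⁅(CommGroup.torsion (Abelianization G)).comap Abelianization.of,
          (⊤ : Subgroup G)⁆)) := by
  set N : Subgroup G := ⁅commutator G, ⊤⁆
  have : Group.FG (Abelianization (G ⧸ N)) :=
    Group.fg_of_surjective (Abelianization.map_surjective (QuotientGroup.mk'_surjective N))
  have := finite_commutator_torsionModCommutator_of_le_center
    (commutator_quotient_le_center (N := N) le_rfl)
  have hmap : (⁅torsionModCommutator G, ⊤⁆ : Subgroup G).map (QuotientGroup.mk' N) ≤
      ⁅torsionModCommutator (G ⧸ N), ⊤⁆ := by
    rw [map_commutator, map_top_of_surjective _ (QuotientGroup.mk'_surjective N)]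
    exact commutator_mono (map_torsionModCommutator_le _) le_rfl
  exact finite_quotient_subgroupOf_of_finite_map (Finite.of_injective _ (inclusion_injective hmap))
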